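/- The function z ↦ conj(w(z)) is complex differentiable at every point of ℂ ∖ (Σ ∪ {0}), where Σ := ⋃_{k=0}^{M−1} { e^{a(θ−θ_k)} e^{iθ} : θ ∈ ℝ } is the union of the M logarithmic spirals; that is, the conjugate velocity profile is holomorphic away from the spirals and the origin. -/

import Mathlib

/-- The complex constant `A := −2ai/(a+i)`. -/
noncomputable def Aconst (a : ℝ) : ℂ := -2 * (a : ℂ) * Complex.I / ((a : ℂ) + Complex.I)

/-- The self-similar velocity profile
`W(r,θ) := e^{iθ} Σ_{k} (2a g_k/(r(a−i))) · conj( exp((2a/(a+i)) ln r) · e^{A(θ_k−θ)} ·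
e^{2πJ(r,θ,k)A}/(1−e^{2πA}) )`, where `J` is the winding-number function. -/
noncomputable def Wprof (a : ℝ) (M : ℕ) (g θs : Fin M → ℝ)
    (J : ℝ → ℝ → Fin M → ℤ) (r θ : ℝ) : ℂ :=
  Complex.exp (Complex.I * (θ : ℂ)) * ∑ k : Fin M,
    (2 * (a : ℂ) * (g k : ℂ) / ((r : ℂ) * ((a : ℂ) - Complex.I))) *
      (starRingEnd ℂ)
        (Complex.exp ((2 * (a : ℂ) / ((a : ℂ) + Complex.I)) * (Real.log r : ℂ)) *
          Complex.exp (Aconst a * ((θs k : ℂ) - (θ : ℂ))) *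
          (Complex.exp (2 * (Real.pi : ℂ) * (J r θ k : ℂ) * Aconst a) /
            (1 - Complex.exp (2 * (Real.pi : ℂ) * Aconst a))))

/-!
In the coordinate `ζ = ln r + iθ`, each summand of `conj W` is `exp` of an affine function of `ζ`,
except for the factor `e^{2πJA}` carrying the winding number. Off the spirals the winding numbers
are locally constant, so `G(ζ) := conj W(e^{Re ζ}, Im ζ)` is holomorphic there. The shift
`J(r, θ + 2π) = J(r, θ) + 1` makes `W` `2π`-periodic in `θ`, hence `G` is `2πi`-periodic, and near
any `z ≠ 0` we get `conj w = G ∘ F` for a holomorphic branch `F` of `log`.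
-/

open Complex Filter Topology

lemma ofReal_add_I_ne_zero (a : ℝ) : (a : ℂ) + I ≠ 0 := by
  intro h
  simpa using congrArg im h

lemma one_sub_exp_two_pi_mul_Aconst_ne_zero {a : ℝ} (ha : 0 < a) :
    1 - exp (2 * Real.pi * Aconst a) ≠ 0 := by
  rw [sub_ne_zero, ne_comm, Ne, exp_eq_one_iff]
  rintro ⟨n, hn⟩
  have hA : Aconst a * (a + I) = n * I * (a + I) := by
    rw [mul_left_cancel₀ (by simp [Real.pi_ne_zero]) (hn.trans (by ring) :
      2 * Real.pi * Aconst a = 2 * Real.pi * (n * I))]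
  rw [Aconst, div_mul_cancel₀ _ (ofReal_add_I_ne_zero a)] at hA
  have hre := congrArg re hA
  have him := congrArg im hA
  simp at hre him
  simp [hre] at him
  linarith

/-- On a region where the winding numbers `J(r,θ,·)` equal the constants `j`, `conj W(r,θ)` is
this entire function of `ζ = ln r + iθ`. -/
noncomputable def Wbranch (a : ℝ) {M : ℕ} (g θs : Fin M → ℝ) (j : Fin M → ℤ) (ζ : ℂ) : ℂ :=
  ∑ k, 2 * a * g k * exp (Aconst a * θs k) / ((a + I) * (1 - exp (2 * Real.pi * Aconst a))) *
    exp ((a - I) / (a + I) * ζ + 2 * Real.pi * j k * Aconst a)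

lemma differentiable_Wbranch (a : ℝ) {M : ℕ} (g θs : Fin M → ℝ) (j : Fin M → ℤ) :
    Differentiable ℂ (Wbranch a g θs j) := by
  unfold Wbranch
  fun_prop

lemma conj_Wprof_eq_Wbranch {a : ℝ} (ha : 0 < a) {M : ℕ} (g θs : Fin M → ℝ)
    (J : ℝ → ℝ → Fin M → ℤ) {r : ℝ} (hr : 0 < r) (θ : ℝ) :
    starRingEnd ℂ (Wprof a M g θs J r θ) = Wbranch a g θs (J r θ) (Real.log r + θ * I) := by
  have hD := one_sub_exp_two_pi_mul_Aconst_ne_zero ha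
  have haI := ofReal_add_I_ne_zero a
  have hr' : (r : ℂ) = exp (Real.log r) := by rw [← ofReal_exp, Real.exp_log hr]
  simp only [Wprof, Wbranch, map_mul, map_sum, map_div₀, map_sub, map_one, conj_conj,
    ← exp_conj, conj_ofReal, conj_I, map_ofNat, Finset.mul_sum, sub_neg_eq_add]
  refine Finset.sum_congr rfl fun k _ => ?_
  set L : ℂ := (Real.log r : ℂ)
  set j : ℂ := (J r θ k : ℂ)
  have hexp : exp (-I * θ) * exp (2 * a / (a + I) * L) * exp (Aconst a * (θs k - θ)) *
      exp (2 * Real.pi * j * Aconst a) =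
      exp (Aconst a * θs k) * exp ((a - I) / (a + I) * (L + θ * I) + 2 * Real.pi * j * Aconst a) *
      exp L := by
    simp only [← exp_add]
    congr 1
    rw [Aconst]
    field_simp
    ring
  rw [hr']
  calc _ = 2 * a * g k / ((a + I) * (1 - exp (2 * Real.pi * Aconst a))) *
        (exp (-I * θ) * exp (2 * a / (a + I) * L) * exp (Aconst a * (θs k - θ)) *
          exp (2 * Real.pi * j * Aconst a)) / exp L := by simp only [div_eq_mul_inv, mul_inv]; ring
    _ = _ := by rw [hexp, mul_div_assoc, mul_div_cancel_right₀ _ (exp_ne_zero _)]; ring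

def IsWindingNumber (a : ℝ) {M : ℕ} (θs : Fin M → ℝ) (J : ℝ → ℝ → Fin M → ℤ) : Prop :=
  ∀ (r θ : ℝ) (k : Fin M), 0 < r →
    IsLeast {j : ℤ | 0 < a * (2 * Real.pi * (j : ℝ) + θs k - θ) + Real.log r} (J r θ k)

namespace IsWindingNumber

variable {a : ℝ} {M : ℕ} {θs : Fin M → ℝ} {J : ℝ → ℝ → Fin M → ℤ}

lemma add_two_pi_mul_int (hJ : IsWindingNumber a θs J) {r : ℝ} (hr : 0 < r) (θ : ℝ) (k : Fin M)
    (n : ℤ) : J r (θ + 2 * Real.pi * n) k = J r θ k + n := by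
  refine (hJ r _ k hr).unique ⟨?_, fun j hj => ?_⟩
  · have hmem := (hJ r θ k hr).1
    simp only [Set.mem_ofPred_eq] at hmem ⊢
    push_cast
    linarith
  · have hmem : j - n ∈ {j : ℤ | 0 < a * (2 * Real.pi * (j : ℝ) + θs k - θ) + Real.log r} := by
      simp only [Set.mem_ofPred_eq] at hj ⊢
      push_cast
      linarith
    linarith [(hJ r θ k hr).2 hmem]

lemma eq_of_pos_of_nonpos (hJ : IsWindingNumber a θs J) (ha : 0 < a) {r : ℝ} (hr : 0 < r)
    {θ : ℝ} {k : Fin M} {j : ℤ} (hpos : 0 < a * (2 * Real.pi * j + θs k - θ) + Real.log r)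
    (hnonpos : a * (2 * Real.pi * (j - 1) + θs k - θ) + Real.log r ≤ 0) : J r θ k = j := by
  refine (hJ r θ k hr).unique ⟨hpos, fun j' hj' => ?_⟩
  by_contra! hlt
  have hj'_le : (j' : ℝ) ≤ j - 1 := by exact_mod_cast Int.le_sub_one_of_lt hlt
  have hj'_pos : 0 < a * (2 * Real.pi * j' + θs k - θ) + Real.log r := hj'
  have hmono := mul_le_mul_of_nonneg_left (by nlinarith [Real.pi_pos] :
    2 * Real.pi * j' + θs k - θ ≤ 2 * Real.pi * (j - 1) + θs k - θ) ha.le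
  linarith

end IsWindingNumber

/-- `conj W` in the logarithmic coordinate `ζ = ln r + iθ`. -/
noncomputable def Wlift (a : ℝ) (M : ℕ) (g θs : Fin M → ℝ) (J : ℝ → ℝ → Fin M → ℤ) (ζ : ℂ) : ℂ :=
  starRingEnd ℂ (Wprof a M g θs J (Real.exp ζ.re) ζ.im)

section Wlift

variable {a : ℝ} {M : ℕ} {g θs : Fin M → ℝ} {J : ℝ → ℝ → Fin M → ℤ}

lemma Wprof_add_two_pi_mul_int (hJ : IsWindingNumber a θs J) {r : ℝ} (hr : 0 < r) (θ : ℝ)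
    (n : ℤ) : Wprof a M g θs J r (θ + 2 * Real.pi * n) = Wprof a M g θs J r θ := by
  have hrot : exp (I * ↑(θ + 2 * Real.pi * n)) = exp (I * θ) :=
    exp_eq_exp_iff_exists_int.mpr ⟨n, by push_cast; ring⟩
  have hwind : ∀ (k : Fin M) (x y : ℂ), exp x * exp (Aconst a * (θs k - ↑(θ + 2 * Real.pi * n))) *
      (exp (2 * Real.pi * (J r (θ + 2 * Real.pi * n) k : ℂ) * Aconst a) / y) =
      exp x * exp (Aconst a * (θs k - θ)) * (exp (2 * Real.pi * (J r θ k : ℂ) * Aconst a) / y) := by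
    intro k x y
    simp only [mul_div_assoc', hJ.add_two_pi_mul_int hr, ← exp_add]
    push_cast
    congr 2
    ring
  simp only [Wprof, hrot, hwind]

lemma Wlift_log {z : ℂ} (hz : z ≠ 0) :
    Wlift a M g θs J (log z) = starRingEnd ℂ (Wprof a M g θs J ‖z‖ (arg z)) := by
  rw [Wlift, log_re, log_im, Real.exp_log (norm_pos_iff.mpr hz)]

lemma Wlift_eq_of_exp_eq (hJ : IsWindingNumber a θs J) {ζ ζ' : ℂ} (h : exp ζ = exp ζ') :
    Wlift a M g θs J ζ = Wlift a M g θs J ζ' := by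
  obtain ⟨n, rfl⟩ := exp_eq_exp_iff_exists_int.mp h
  have him : (ζ' + n * (2 * Real.pi * I)).im = ζ'.im + 2 * Real.pi * n := by simp; ring
  rw [Wlift, Wlift, him, Wprof_add_two_pi_mul_int hJ (Real.exp_pos _)]
  simp

lemma Wlift_eq_Wbranch (ha : 0 < a) (ζ : ℂ) :
    Wlift a M g θs J ζ = Wbranch a g θs (J (Real.exp ζ.re) ζ.im) ζ := by
  rw [Wlift, conj_Wprof_eq_Wbranch ha g θs J (Real.exp_pos _), Real.log_exp, re_add_im]

lemma IsWindingNumber.eventually_eq (hJ : IsWindingNumber a θs J) (ha : 0 < a) {ζ₀ : ℂ}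
    (hζ₀ : ∀ k (j : ℤ), a * (2 * Real.pi * j + θs k - ζ₀.im) + ζ₀.re ≠ 0) :
    ∀ᶠ ζ in 𝓝 ζ₀, J (Real.exp ζ.re) ζ.im = J (Real.exp ζ₀.re) ζ₀.im := by
  have hcont : ∀ (k : Fin M) (j : ℝ),
      Continuous fun ζ : ℂ => a * (2 * Real.pi * j + θs k - ζ.im) + ζ.re := by
    intro k j; fun_prop
  have hk : ∀ k, ∀ᶠ ζ in 𝓝 ζ₀, J (Real.exp ζ.re) ζ.im k = J (Real.exp ζ₀.re) ζ₀.im k := by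
    intro k
    set j₀ := J (Real.exp ζ₀.re) ζ₀.im k
    have hmin := hJ _ ζ₀.im k (Real.exp_pos ζ₀.re)
    rw [Real.log_exp] at hmin
    have hpos : 0 < a * (2 * Real.pi * j₀ + θs k - ζ₀.im) + ζ₀.re := hmin.1
    have hneg : a * (2 * Real.pi * (j₀ - 1 : ℤ) + θs k - ζ₀.im) + ζ₀.re < 0 := by
      refine lt_of_le_of_ne (not_lt.mp fun h => ?_) (hζ₀ k _)
      linarith [hmin.2 h]
    filter_upwards [continuousAt_const.eventually_lt (hcont k j₀).continuousAt hpos,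
      (hcont k _).continuousAt.eventually_lt continuousAt_const hneg] with ζ hζpos hζneg
    refine hJ.eq_of_pos_of_nonpos ha (Real.exp_pos _) ?_ ?_ <;> rw [Real.log_exp]
    · exact hζpos
    · exact_mod_cast hζneg.le
  filter_upwards [eventually_all.mpr hk] with ζ hζ using funext hζ

lemma differentiableAt_Wlift (hJ : IsWindingNumber a θs J) (ha : 0 < a) {ζ₀ : ℂ}
    (hζ₀ : ∀ k (j : ℤ), a * (2 * Real.pi * j + θs k - ζ₀.im) + ζ₀.re ≠ 0) :
    DifferentiableAt ℂ (Wlift a M g θs J) ζ₀ := by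
  refine (differentiable_Wbranch a g θs (J (Real.exp ζ₀.re) ζ₀.im) ζ₀).congr_of_eventuallyEq ?_
  filter_upwards [hJ.eventually_eq ha hζ₀] with ζ hζ
  rw [Wlift_eq_Wbranch ha, hζ]

end Wlift

lemma exists_log_branch {z : ℂ} (hz : z ≠ 0) :
    ∃ F : ℂ → ℂ, DifferentiableAt ℂ F z ∧ F z = log z ∧ ∀ᶠ w in 𝓝 z, exp (F w) = w := by
  refine ⟨fun w => log (w / z) + log z, ?_, by simp [div_self hz], ?_⟩
  · have h1 : z / z ∈ slitPlane := by rw [div_self hz]; exact one_mem_slitPlane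
    exact ((differentiableAt_log h1).comp (f := fun w => w / z) z
      (differentiableAt_id.div_const z)).add_const _
  · filter_upwards [eventually_ne_nhds hz] with w hw
    rw [exp_add, exp_log (div_ne_zero hw hz), exp_log hz, div_mul_cancel₀ _ hz]

lemma spiral_gap_ne_zero {a b : ℝ} {z : ℂ} (hz : z ≠ 0)
    (h : ∀ θ : ℝ, z ≠ Real.exp (a * (θ - b)) * exp (I * θ)) (j : ℤ) :
    a * (2 * Real.pi * j + b - arg z) + Real.log ‖z‖ ≠ 0 := by
  intro h0
  apply h (arg z - 2 * Real.pi * j)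
  have hmod : Real.exp (a * (arg z - 2 * Real.pi * j - b)) = ‖z‖ := by
    rw [show a * (arg z - 2 * Real.pi * j - b) = Real.log ‖z‖ by linarith,
      Real.exp_log (norm_pos_iff.mpr hz)]
  rw [hmod]
  conv_lhs => rw [← norm_mul_exp_arg_mul_I z]
  exact congrArg _ (exp_eq_exp_iff_exists_int.mpr ⟨j, by push_cast; ring⟩)

theorem Wprof_conj_holomorphic_off_spirals_general (a : ℝ) (ha : 0 < a) (M : ℕ)
    (g θs : Fin M → ℝ) (J : ℝ → ℝ → Fin M → ℤ)
    (hJ : ∀ (r θ : ℝ) (k : Fin M), 0 < r →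
      IsLeast {j : ℤ | 0 < a * (2 * Real.pi * (j : ℝ) + θs k - θ) + Real.log r} (J r θ k)) :
    ∀ z : ℂ,
      z ∉ (⋃ k : Fin M,
          {z' : ℂ | ∃ θ : ℝ,
            z' = (Real.exp (a * (θ - θs k)) : ℂ) * Complex.exp (Complex.I * (θ : ℂ))}) ∪ {0} →
      DifferentiableAt ℂ
        (fun z' : ℂ =>
          (starRingEnd ℂ) (Wprof a M g θs J ‖z'‖ (Complex.arg z'))) z := by
  intro z hz
  simp only [Set.mem_union, Set.mem_iUnion, Set.mem_ofPred_eq, Set.mem_singleton_iff, not_or,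
    not_exists] at hz
  obtain ⟨hspiral, hz0⟩ := hz
  obtain ⟨F, hF, hFz, hexpF⟩ := exists_log_branch hz0
  have hW : DifferentiableAt ℂ (Wlift a M g θs J) (F z) := differentiableAt_Wlift hJ ha
    fun k j => by simpa [hFz, log_re, log_im] using spiral_gap_ne_zero hz0 (hspiral k) j
  refine (hW.comp z hF).congr_of_eventuallyEq ?_
  filter_upwards [hexpF, eventually_ne_nhds hz0] with w hw hw0
  rw [Function.comp_apply, Wlift_eq_of_exp_eq hJ (hw.trans (exp_log hw0).symm), Wlift_log hw0]

/-- The function `z ↦ conj(w(z))`, where `w(z) := W(|z|, arg z)`, is complex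
differentiable at every point of `ℂ ∖ (Σ ∪ {0})`, where
`Σ := ⋃_k { e^{a(θ−θ_k)} e^{iθ} : θ ∈ ℝ }` is the union of the `M` logarithmic spirals. -/
theorem Wprof_conj_holomorphic_off_spirals (a : ℝ) (ha : 0 < a) (M : ℕ) (hM : 1 ≤ M)
    (g θs : Fin M → ℝ) (J : ℝ → ℝ → Fin M → ℤ)
    (hJ : ∀ (r θ : ℝ) (k : Fin M), 0 < r →
      IsLeast {j : ℤ | 0 < a * (2 * Real.pi * (j : ℝ) + θs k - θ) + Real.log r} (J r θ k)) :
    ∀ z : ℂ,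
      z ∉ (⋃ k : Fin M,
          {z' : ℂ | ∃ θ : ℝ,
            z' = (Real.exp (a * (θ - θs k)) : ℂ) * Complex.exp (Complex.I * (θ : ℂ))}) ∪ {0} →
      DifferentiableAt ℂ
        (fun z' : ℂ =>
          (starRingEnd ℂ) (Wprof a M g θs J ‖z'‖ (Complex.arg z'))) z :=
  Wprof_conj_holomorphic_off_spirals_general a ha M g θs J hJ
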